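/- arXiv:1501.04130 — 2 statements merged into one kernel-verified Lean document; each statement's English description precedes it below -/
import Mathlib

section
/- Let 0 < r < R < 1. Then the image of the restriction map O(Δ) → O(A(r,R)) is dense in the image of the restriction map O(Δ_R) → O(A(r,R)), where Δ is the unit disc and Δ_R the disc of radius R; in particular, the closure of O(Δ)|_{A(r,R)} in O(A(r,R)) equals the (closed) image of O(Δ_R) under restriction. -/
/-!
Density: the Taylor partial sums at `0` of a function holomorphic on `Δ_R` are entire and converge
to it locally uniformly on `Δ_R`.

Closedness of the image of `O(Δ_R)`: for `g ∈ C(A(r,R))` and `r < ρ < R`, the Cauchy integral of `g`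
over the circle `|z| = ρ` depends continuously on `g`. Hence "these integrals agree with one another
and reproduce `g` inside their circle" is a closed condition on `g`. It holds for restrictions of
functions holomorphic on `Δ_R` by the Cauchy integral formula, and conversely the integrals then
patch together to a holomorphic function on `Δ_R` extending `g`.
-/

open Set

/-- The holomorphic functions on an open set `U`, viewed as a subset of `C(U, ℂ)`
(which carries the compact-open topology). -/
def Hol {E : Type*} [NormedAddCommGroup E] [NormedSpace ℂ E] (U : Set E) :
    Set C(U, ℂ) :=
  {f | ∃ F : E → ℂ, DifferentiableOn ℂ F U ∧ ∀ z : U, f z = F z}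

open Metric Filter Topology Complex
open scoped NNReal Real

theorem FormalMultilinearSeries.differentiable_partialSum {E : Type*} [NormedAddCommGroup E]
    [NormedSpace ℂ E] (p : FormalMultilinearSeries ℂ ℂ E) (n : ℕ) :
    Differentiable ℂ (p.partialSum n) := by
  unfold FormalMultilinearSeries.partialSum
  simp only [FormalMultilinearSeries.apply_eq_pow_smul_coeff]
  fun_prop

theorem DifferentiableOn.exists_hasFPowerSeriesOnBall {E : Type*} [NormedAddCommGroup E]
    [NormedSpace ℂ E] [CompleteSpace E] {f : ℂ → E} {c : ℂ} {R : ℝ≥0}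
    (hf : DifferentiableOn ℂ f (ball c R)) (hR : 0 < R) :
    ∃ p : FormalMultilinearSeries ℂ ℂ E, HasFPowerSeriesOnBall f p c R := by
  have hsmall : ∀ r : ℝ≥0, 0 < r → r < R →
      HasFPowerSeriesOnBall f (cauchyPowerSeries f c r) c r := fun r hr hrR =>
    (hf.mono (closedBall_subset_ball (by exact_mod_cast hrR))).hasFPowerSeriesOnBall hr
  have h₀ := hsmall (R / 2) (half_pos hR) (half_lt_self hR)
  refine ⟨cauchyPowerSeries f c (R / 2), ⟨ENNReal.le_of_forall_pos_nnreal_lt fun r hr hrR => ?_,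
    by simpa using hR, fun {y} hy => ?_⟩⟩
  · exact (h₀.exchange_radius (hsmall r hr (by exact_mod_cast hrR))).r_le
  · obtain ⟨r, hyr, hrR⟩ := exists_between (mem_eball_zero_iff.1 hy)
    lift r to ℝ≥0 using hrR.ne_top
    exact (h₀.exchange_radius (hsmall r (ENNReal.coe_pos.1 (pos_of_gt hyr))
      (by exact_mod_cast hrR))).hasSum (mem_eball_zero_iff.2 hyr)

theorem DifferentiableOn.exists_tendstoLocallyUniformlyOn_ball {E : Type*} [NormedAddCommGroup E]
    [NormedSpace ℂ E] [CompleteSpace E] {f : ℂ → E} {c : ℂ} {R : ℝ}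
    (hf : DifferentiableOn ℂ f (ball c R)) :
    ∃ u : ℕ → ℂ → E, (∀ n, Differentiable ℂ (u n)) ∧
      TendstoLocallyUniformlyOn u f atTop (ball c R) := by
  rcases le_or_gt R 0 with hR | hR
  · refine ⟨fun _ => 0, fun _ => differentiable_const 0, fun _ _ z hz => ?_⟩
    simp [ball_eq_empty.2 hR] at hz
  lift R to ℝ≥0 using hR.le
  obtain ⟨p, hp⟩ := hf.exists_hasFPowerSeriesOnBall (by exact_mod_cast hR)
  refine ⟨fun n z => p.partialSum n (z - c), fun n => ?_, ?_⟩
  · exact (p.differentiable_partialSum n).comp (differentiable_id.sub_const c)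
  · simpa using hp.tendstoLocallyUniformlyOn'

noncomputable def circleCauchy {A : Set ℂ} (c : ℂ) (ρ : ℝ) (g : C(A, ℂ)) (w : ℂ) : ℂ :=
  (2 * π * I : ℂ)⁻¹ • ∮ z in C(c, ρ), (z - w)⁻¹ • Function.extend ((↑) : A → ℂ) g 0 z

section circleCauchy

variable {A : Set ℂ} {c : ℂ} {ρ : ℝ}

theorem continuousOn_extend_subtype_val (g : C(A, ℂ)) :
    ContinuousOn (Function.extend ((↑) : A → ℂ) g 0) A := by
  rw [continuousOn_iff_continuous_domRestrict]
  convert g.continuous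
  ext z
  exact Subtype.val_injective.extend_apply _ _ z

theorem differentiableOn_circleCauchy (hρ : 0 < ρ) (hA : sphere c ρ ⊆ A) (g : C(A, ℂ)) :
    DifferentiableOn ℂ (circleCauchy c ρ g) (ball c ρ) := by
  lift ρ to ℝ≥0 using hρ.le
  have hint : CircleIntegrable (Function.extend ((↑) : A → ℂ) g 0) c ρ :=
    ((continuousOn_extend_subtype_val g).mono hA).circleIntegrable ρ.2
  have := (hasFPowerSeriesOn_cauchy_integral hint (by exact_mod_cast hρ)).differentiableOn
  rwa [Metric.eball_coe] at this

theorem circleCauchy_eq_of_differentiableOn (hA : sphere c ρ ⊆ A) {g : C(A, ℂ)} {F : ℂ → ℂ}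
    (hF : DifferentiableOn ℂ F (closedBall c ρ)) (hgF : ∀ z : A, g z = F z) {w : ℂ}
    (hw : w ∈ ball c ρ) : circleCauchy c ρ g w = F w := by
  rw [circleCauchy, ← (hF.mono closure_ball_subset_closedBall).diffContOnCl
    |>.two_pi_i_inv_smul_circleIntegral_sub_inv_smul hw]
  congr 1
  refine circleIntegral.integral_congr (pos_of_mem_ball hw).le fun z hz => ?_
  rw [← hgF ⟨z, hA hz⟩]
  exact congrArg _ (Subtype.val_injective.extend_apply _ _ (⟨z, hA hz⟩ : A))

theorem continuous_circleCauchy (hρ : 0 ≤ ρ) (hA : sphere c ρ ⊆ A) {w : ℂ}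
    (hw : w ∉ sphere c ρ) : Continuous fun g : C(A, ℂ) => circleCauchy c ρ g w := by
  let ι : C(sphere c ρ, A) := ⟨inclusion hA, continuous_inclusion hA⟩
  let θc : C(ℝ, sphere c ρ) :=
    ⟨fun θ => ⟨circleMap c ρ θ, circleMap_mem_sphere c hρ θ⟩, by fun_prop⟩
  have hext : ∀ (g : C(A, ℂ)) (θ : ℝ),
      Function.extend ((↑) : A → ℂ) g 0 (circleMap c ρ θ) = g.comp ι (θc θ) := fun g θ =>
    Subtype.val_injective.extend_apply _ _ (⟨_, hA (circleMap_mem_sphere c hρ θ)⟩ : A)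
  have hne : ∀ θ, circleMap c ρ θ - w ≠ 0 :=
    fun θ => sub_ne_zero.2 fun h => hw (h ▸ circleMap_mem_sphere c hρ θ)
  simp only [circleCauchy, circleIntegral, hext, smul_eq_mul, deriv_circleMap]
  refine continuous_const.mul ?_
  apply intervalIntegral.continuous_parametric_intervalIntegral_of_continuous'
  fun_prop (disch := exact fun _ => hne _)

end circleCauchy

def holRestrict (A V : Set ℂ) : Set C(A, ℂ) :=
  {g | ∃ F : ℂ → ℂ, DifferentiableOn ℂ F V ∧ ∀ z : A, g z = F z}

section holRestrict

variable {A : Set ℂ} {c : ℂ} {r R : ℝ}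

theorem image_comp_inclusion_Hol {V : Set ℂ} (h : A ⊆ V) :
    (fun f : C(V, ℂ) => f.comp ⟨inclusion h, continuous_inclusion h⟩) '' Hol V =
      holRestrict A V := by
  ext g
  constructor
  · rintro ⟨f, ⟨F, hF, hfF⟩, rfl⟩
    exact ⟨F, hF, fun z => hfF (inclusion h z)⟩
  · rintro ⟨F, hF, hgF⟩
    refine ⟨⟨fun z => F z, hF.continuousOn.domRestrict⟩, ⟨F, hF, fun _ => rfl⟩, ?_⟩
    ext z
    exact (hgF z).symm

theorem holRestrict_anti {V W : Set ℂ} (h : V ⊆ W) : holRestrict A W ⊆ holRestrict A V :=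
  fun _ ⟨F, hF, hgF⟩ => ⟨F, hF.mono h, hgF⟩

theorem holRestrict_ball_subset_closure_univ (hA : A ⊆ ball c R) :
    holRestrict A (ball c R) ⊆ closure (holRestrict A univ) := by
  rintro g ⟨F, hF, hgF⟩
  obtain ⟨u, hu, hlim⟩ := hF.exists_tendstoLocallyUniformlyOn_ball
  let q : ℕ → C(A, ℂ) := fun n => ⟨fun z => u n z, (hu n).continuous.comp continuous_subtype_val⟩
  refine mem_closure_of_tendsto (f := q) (b := atTop) ?_
    (Eventually.of_forall fun n => ⟨u n, (hu n).differentiableOn, fun _ => rfl⟩)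
  rw [ContinuousMap.tendsto_iff_forall_isCompact_tendstoUniformlyOn]
  intro K hK
  have hlimK := (tendstoLocallyUniformlyOn_iff_forall_isCompact isOpen_ball).1 hlim
    ((↑) '' K) (image_subset_iff.2 fun x _ => hA x.2) (hK.image continuous_subtype_val)
  refine ((hlimK.comp (↑)).mono (subset_preimage_image _ _)).congr_right fun (x : A) _ => ?_
  exact (hgF x).symm

def cauchyCoherent (A : Set ℂ) (c : ℂ) (r R : ℝ) : Set C(A, ℂ) :=
  {g | (∀ ρ ∈ Ioo r R, ∀ ρ' ∈ Ioo r R, ∀ w ∈ ball c ρ ∩ ball c ρ',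
      circleCauchy c ρ g w = circleCauchy c ρ' g w) ∧
    ∀ ρ ∈ Ioo r R, ∀ x : A, ↑x ∈ ball c ρ → g x = circleCauchy c ρ g x}

theorem isClosed_cauchyCoherent (hsph : ∀ ρ ∈ Ioo r R, sphere c ρ ⊆ A) :
    IsClosed (cauchyCoherent A c r R) := by
  have hcont : ∀ ρ ∈ Ioo r R, ∀ w ∈ ball c ρ, Continuous fun g : C(A, ℂ) => circleCauchy c ρ g w :=
    fun ρ hρ w hw => continuous_circleCauchy (pos_of_mem_ball hw).le (hsph ρ hρ)
      fun h => (mem_ball.1 hw).ne (mem_sphere.1 h)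
  simp only [cauchyCoherent, ofPred_and, ofPred_forall]
  refine .inter (isClosed_biInter fun ρ hρ => isClosed_biInter fun ρ' hρ' =>
    isClosed_biInter fun w hw => isClosed_eq (hcont ρ hρ w hw.1) (hcont ρ' hρ' w hw.2))
    (isClosed_biInter fun ρ hρ => isClosed_iInter fun x => isClosed_iInter fun hx =>
      isClosed_eq (continuous_eval_const x) (hcont ρ hρ x hx))

theorem holRestrict_ball_subset_cauchyCoherent (hsph : ∀ ρ ∈ Ioo r R, sphere c ρ ⊆ A) :
    holRestrict A (ball c R) ⊆ cauchyCoherent A c r R := by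
  rintro g ⟨F, hF, hgF⟩
  have hcauchy : ∀ ρ ∈ Ioo r R, ∀ w ∈ ball c ρ, circleCauchy c ρ g w = F w := fun ρ hρ _ =>
    circleCauchy_eq_of_differentiableOn (hsph ρ hρ) (hF.mono (closedBall_subset_ball hρ.2)) hgF
  refine ⟨fun ρ hρ ρ' hρ' w hw => ?_, fun ρ hρ x hx => ?_⟩
  · rw [hcauchy ρ hρ w hw.1, hcauchy ρ' hρ' w hw.2]
  · rw [hcauchy ρ hρ x hx, hgF]

theorem cauchyCoherent_subset_holRestrict_ball (hrR : r < R) (hA : A ⊆ ball c R)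
    (hsph : ∀ ρ ∈ Ioo r R, sphere c ρ ⊆ A) :
    cauchyCoherent A c r R ⊆ holRestrict A (ball c R) := by
  rintro g ⟨hcoh, hrepr⟩
  -- any radius in `(max r |w - c|, R)` will do; take the midpoint
  let ρ : ℂ → ℝ := fun w => (max r (dist w c) + R) / 2
  have hρ : ∀ w ∈ ball c R, ρ w ∈ Ioo r R ∧ w ∈ ball c (ρ w) := by
    intro w hw
    have hmax := max_lt hrR (mem_ball.1 hw)
    refine ⟨⟨?_, ?_⟩, mem_ball.2 ?_⟩ <;> simp only [ρ] <;>
      linarith [le_max_left r (dist w c), le_max_right r (dist w c)]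
  refine ⟨fun w => circleCauchy c (ρ w) g w, fun w₀ hw₀ => ?_, fun x => ?_⟩
  · obtain ⟨hρ₀, hw₀ρ⟩ := hρ w₀ hw₀
    have hloc : (fun w => circleCauchy c (ρ w) g w) =ᶠ[𝓝 w₀] circleCauchy c (ρ w₀) g := by
      filter_upwards [isOpen_ball.mem_nhds hw₀ρ, isOpen_ball.mem_nhds hw₀] with w hw hwR
      exact hcoh _ (hρ w hwR).1 _ hρ₀ w ⟨(hρ w hwR).2, hw⟩
    exact ((differentiableOn_circleCauchy (pos_of_mem_ball hw₀ρ) (hsph _ hρ₀) g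
      |>.differentiableAt (isOpen_ball.mem_nhds hw₀ρ)).congr_of_eventuallyEq
      hloc).differentiableWithinAt
  · obtain ⟨hρx, hxρ⟩ := hρ x (hA x.2)
    exact hrepr _ hρx x hxρ

theorem isClosed_holRestrict_ball (hrR : r < R) (hA : A ⊆ ball c R)
    (hsph : ∀ ρ ∈ Ioo r R, sphere c ρ ⊆ A) : IsClosed (holRestrict A (ball c R)) := by
  rw [(holRestrict_ball_subset_cauchyCoherent hsph).antisymm
    (cauchyCoherent_subset_holRestrict_ball hrR hA hsph)]
  exact isClosed_cauchyCoherent hsph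

end holRestrict

theorem stmt_8_general (r R : ℝ) (hrR : r < R) (hR : R < 1) :
    let Δ : Set ℂ := {z | ‖z‖ < 1}
    let ΔR : Set ℂ := {z | ‖z‖ < R}
    let A : Set ℂ := {z | r < ‖z‖ ∧ ‖z‖ < R}
    let hAΔ : A ⊆ Δ := fun _ hz => lt_trans hz.2 hR
    let hAΔR : A ⊆ ΔR := fun _ hz => hz.2
    let res1 : C(Δ, ℂ) → C(A, ℂ) := fun f =>
      f.comp ⟨Set.inclusion hAΔ, continuous_inclusion hAΔ⟩
    let res2 : C(ΔR, ℂ) → C(A, ℂ) := fun f =>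
      f.comp ⟨Set.inclusion hAΔR, continuous_inclusion hAΔR⟩
    res2 '' Hol ΔR ⊆ closure (res1 '' Hol Δ) ∧
    closure (res1 '' Hol Δ) = res2 '' Hol ΔR := by
  intro Δ ΔR A hAΔ hAΔR res1 res2
  have hΔR : ΔR = ball 0 R := by ext z; simp [ΔR]
  have hA : A ⊆ ball 0 R := fun z hz => mem_ball_zero_iff.2 hz.2
  have hsph : ∀ ρ ∈ Ioo r R, sphere (0 : ℂ) ρ ⊆ A := fun ρ hρ z hz => by
    rw [mem_sphere_zero_iff_norm] at hz
    exact ⟨hz ▸ hρ.1, hz ▸ hρ.2⟩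
  have himage₁ : res1 '' Hol Δ = holRestrict A Δ := image_comp_inclusion_Hol hAΔ
  have himage₂ : res2 '' Hol ΔR = holRestrict A (ball 0 R) := by
    rw [← hΔR]; exact image_comp_inclusion_Hol hAΔR
  have hclosure : closure (res1 '' Hol Δ) = res2 '' Hol ΔR := by
    rw [himage₁, himage₂]
    refine subset_antisymm (closure_minimal (holRestrict_anti ?_)
      (isClosed_holRestrict_ball hrR hA hsph)) ?_
    · exact fun z hz => (mem_ball_zero_iff.1 hz).trans hR
    · exact (holRestrict_ball_subset_closure_univ hA).trans
        (closure_mono (holRestrict_anti (subset_univ Δ)))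
  exact ⟨hclosure.ge, hclosure⟩

/-- For `0 < r < R < 1`, the image of the restriction map `O(Δ) → O(A(r,R))` is dense
in the image of the restriction map `O(Δ_R) → O(A(r,R))`; in fact the closure of
`O(Δ)|_{A(r,R)}` equals the image of `O(Δ_R)` under restriction. -/
theorem stmt_8 (r R : ℝ) (hr : 0 < r) (hrR : r < R) (hR : R < 1) :
    let Δ : Set ℂ := {z | ‖z‖ < 1}
    let ΔR : Set ℂ := {z | ‖z‖ < R}
    let A : Set ℂ := {z | r < ‖z‖ ∧ ‖z‖ < R}
    let hAΔ : A ⊆ Δ := fun _ hz => lt_trans hz.2 hR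
    let hAΔR : A ⊆ ΔR := fun _ hz => hz.2
    let res1 : C(Δ, ℂ) → C(A, ℂ) := fun f =>
      f.comp ⟨Set.inclusion hAΔ, continuous_inclusion hAΔ⟩
    let res2 : C(ΔR, ℂ) → C(A, ℂ) := fun f =>
      f.comp ⟨Set.inclusion hAΔR, continuous_inclusion hAΔR⟩
    res2 '' Hol ΔR ⊆ closure (res1 '' Hol Δ) ∧
    closure (res1 '' Hol Δ) = res2 '' Hol ΔR :=
  stmt_8_general r R hrR hR
end

section
/- If O(X₀) = R ⊕ Q is a topological direct sum decomposition with R = O(X)|_{X₀} closed and Q closed, then for the induced decomposition O(X₀ × Y₀) = (R ⊗̂ O(Y₀)) ⊕ (Q ⊗̂ O(Y₀)), the intersection (Q ⊗̂ O(Y₀)) ∩ (R ⊗̂ O(Y₀)) = {0}. -/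
open Set

/-- Restriction of continuous functions along an inclusion of sets. -/
noncomputable def res {α : Type*} [TopologicalSpace α] {s t : Set α} (h : s ⊆ t) (f : C(t, ℂ)) :
    C(s, ℂ) :=
  f.comp ⟨Set.inclusion h, continuous_inclusion h⟩

/-- The tensor product `f ⊗ g : (z, w) ↦ f z * g w`. -/
noncomputable def tensor {α β : Type*} [TopologicalSpace α] [TopologicalSpace β]
    {X : Set α} {Y : Set β} (f : C(X, ℂ)) (g : C(Y, ℂ)) : C(↥(X ×ˢ Y), ℂ) :=
  ⟨fun p => f ⟨p.1.1, p.2.1⟩ * g ⟨p.1.2, p.2.2⟩, by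
    exact ((f.continuous.comp
        (((continuous_fst.comp continuous_subtype_val)).subtype_mk fun p => p.2.1)).mul
      (g.continuous.comp
        (((continuous_snd.comp continuous_subtype_val)).subtype_mk fun p => p.2.2)))⟩

/-- Slicing a continuous function on `X₀ ×ˢ Y₀` at a fixed `w : Y₀`, as a linear map. -/
noncomputable def sliceMap {m k : ℕ} (X₀ : Set (Fin m → ℂ)) (Y₀ : Set (Fin k → ℂ)) (w : Y₀) :
    C(↥(X₀ ×ˢ Y₀), ℂ) →ₗ[ℂ] C(X₀, ℂ) where
  toFun F := F.comp ⟨fun z => ⟨(z.1, w.1), ⟨z.2, w.2⟩⟩, by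
    exact Continuous.subtype_mk (by fun_prop) _⟩
  map_add' F G := rfl
  map_smul' c F := rfl

theorem sliceMap_continuous {m k : ℕ} (X₀ : Set (Fin m → ℂ)) (Y₀ : Set (Fin k → ℂ)) (w : Y₀) :
    Continuous (sliceMap X₀ Y₀ w) :=
  ContinuousMap.continuous_precomp _

/-- If `O(X₀) = R ⊕ Q` is a topological direct sum with `R = O(X)|_{X₀}` closed and `Q`
closed, then in the induced decomposition of `O(X₀ × Y₀)` the pieces are disjoint:
`(Q ⊗̂ O(Y₀)) ∩ (R ⊗̂ O(Y₀)) = {0}`, where `⊗̂` is the closure in `O(X₀ × Y₀)` of the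
span of products. -/
theorem stmt_17 {m k : ℕ} (X₀ X : Set (Fin m → ℂ)) (Y₀ : Set (Fin k → ℂ))
    (hX₀ : IsOpen X₀) (hX : IsOpen X) (hY₀ : IsOpen Y₀) (h0X : X₀ ⊆ X)
    (R Q : Submodule ℂ C(X₀, ℂ))
    (hRim : (R : Set C(X₀, ℂ)) = res h0X '' Hol X)
    (hRclosed : IsClosed (R : Set C(X₀, ℂ))) (hQclosed : IsClosed (Q : Set C(X₀, ℂ)))
    (hRHol : (R : Set C(X₀, ℂ)) ⊆ Hol X₀) (hQHol : (Q : Set C(X₀, ℂ)) ⊆ Hol X₀)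
    (hRQ : (R : Set C(X₀, ℂ)) ∩ (Q : Set C(X₀, ℂ)) = {0})
    (hdecomp : ∀ f ∈ Hol X₀, ∃ g ∈ R, ∃ h ∈ Q, f = g + h) :
    closure (↑(Submodule.span ℂ
        {h : C(↥(X₀ ×ˢ Y₀), ℂ) | ∃ f ∈ Q, ∃ g ∈ Hol Y₀, h = tensor f g}) :
          Set C(↥(X₀ ×ˢ Y₀), ℂ)) ∩
      closure (↑(Submodule.span ℂ
        {h : C(↥(X₀ ×ˢ Y₀), ℂ) | ∃ f ∈ R, ∃ g ∈ Hol Y₀, h = tensor f g}) :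
          Set C(↥(X₀ ×ˢ Y₀), ℂ)) = {0} := by
  apply Set.eq_singleton_iff_unique_mem.mpr
  refine ⟨⟨subset_closure (Submodule.zero_mem _), subset_closure (Submodule.zero_mem _)⟩, ?_⟩
  rintro F ⟨hFQ, hFR⟩
  have hmem : ∀ (w : Y₀) (M : Submodule ℂ C(X₀, ℂ)), IsClosed (M : Set C(X₀, ℂ)) →
      F ∈ closure (↑(Submodule.span ℂ
        {h : C(↥(X₀ ×ˢ Y₀), ℂ) | ∃ f ∈ M, ∃ g ∈ Hol Y₀, h = tensor f g}) :
          Set C(↥(X₀ ×ˢ Y₀), ℂ)) → sliceMap X₀ Y₀ w F ∈ M := by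
    intro w M hMcl hF
    have hsub : (↑(Submodule.span ℂ
        {h : C(↥(X₀ ×ˢ Y₀), ℂ) | ∃ f ∈ M, ∃ g ∈ Hol Y₀, h = tensor f g}) :
          Set C(↥(X₀ ×ˢ Y₀), ℂ)) ⊆ (sliceMap X₀ Y₀ w) ⁻¹' (M : Set C(X₀, ℂ)) := by
      have hle : Submodule.span ℂ
          {h : C(↥(X₀ ×ˢ Y₀), ℂ) | ∃ f ∈ M, ∃ g ∈ Hol Y₀, h = tensor f g} ≤
          M.comap (sliceMap X₀ Y₀ w) := by
        rw [Submodule.span_le]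
        rintro x ⟨f, hf, g, hg, rfl⟩
        have heq : sliceMap X₀ Y₀ w (tensor f g) = g w • f := by
          ext z
          simp [sliceMap, tensor, mul_comm]
        simpa [Submodule.mem_comap, heq] using M.smul_mem (g w) hf
      exact fun x hx => hle hx
    exact closure_minimal hsub (hMcl.preimage (sliceMap_continuous X₀ Y₀ w)) hF
  show F = 0
  ext q
  obtain ⟨⟨z, w⟩, hz, hw⟩ := q
  have h1 := hmem ⟨w, hw⟩ Q hQclosed hFQ
  have h2 := hmem ⟨w, hw⟩ R hRclosed hFR
  have h0 : sliceMap X₀ Y₀ ⟨w, hw⟩ F = 0 := by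
    have : sliceMap X₀ Y₀ ⟨w, hw⟩ F ∈ ((R : Set C(X₀, ℂ)) ∩ (Q : Set C(X₀, ℂ))) := ⟨h2, h1⟩
    rw [hRQ] at this
    exact this
  have := ContinuousMap.congr_fun h0 ⟨z, hz⟩
  simpa [sliceMap] using this
end
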